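/- Let V be a 3-dimensional vector space over a field F with |F| ≥ 5 and characteristic ≠ 2, carrying a nondegenerate symmetric bilinear form. Then the collinearity graph on nondegenerate 1-dimensional subspaces, with adjacency given by spanning a nondegenerate 2-dimensional subspace, is connected of diameter at most two. -/

import Mathlib

/-!
Any two points `⟨a⟩`, `⟨b⟩` have a common neighbour `⟨c⟩`: it suffices that `B c c` and the
Gram determinants of `(a, c)` and `(b, c)` are nonzero, since a pair with nonzero Gram determinant
spans a nondegenerate plane. As `dim V ≥ 3` there is `d ≠ 0` orthogonal to `a` and `b`. If
`B d d ≠ 0`, take `c = d`: the Gram determinants are `B a a * B d d` and `B b b * B d d`. Otherwise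
choose `e` with `B d e ≠ 0` and `c = s • d + e`: the three quantities are affine in `s`, with
slopes `2 * B d e`, `2 * B a a * B d e` and `2 * B b b * B d e`, so they vanish for at most three
values of `s`, and `|F| ≥ 4` leaves a good one.
-/

open Module

def collinearityGraph {F V : Type*} [Field F] [AddCommGroup V] [Module F V]
    (B : LinearMap.BilinForm F V) :
    SimpleGraph {P : Submodule F V // finrank F P = 1 ∧ (B.restrict P).Nondegenerate} where
  Adj P Q := P ≠ Q ∧ finrank F (P.1 ⊔ Q.1 : Submodule F V) = 2 ∧
    (B.restrict (P.1 ⊔ Q.1)).Nondegenerate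
  symm := by
    constructor
    rintro P Q ⟨hne, hdim, hnd⟩
    exact ⟨hne.symm, by rwa [sup_comm], by rwa [sup_comm]⟩
  loopless := by constructor; rintro P ⟨hne, -, -⟩; exact hne rfl

open Cardinal Matrix

theorem exists_forall_mul_add_ne_zero {F : Type*} [Field F] {n : ℕ} (hn : (n : Cardinal) < #F)
    (l m : Fin n → F) (hl : ∀ i, l i ≠ 0) : ∃ s, ∀ i, l i * s + m i ≠ 0 := by
  obtain ⟨s, hs⟩ := exists_notMem_of_length_lt (List.ofFn fun i => -m i / l i) (by simpa using hn)
  refine ⟨s, fun i h => hs (List.mem_ofFn.mpr ⟨i, ?_⟩)⟩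
  field_simp [hl i]
  linear_combination -h

theorem exists_ne_zero_apply_eq_zero_of_two_lt_finrank {F V : Type*} [Field F] [AddCommGroup V]
    [Module F V] (hV : 2 < finrank F V) (f g : Dual F V) : ∃ d ≠ 0, f d = 0 ∧ g d = 0 := by
  have : FiniteDimensional F V := Module.finite_of_finrank_pos (by omega)
  obtain ⟨d, hd, hd0⟩ := Submodule.exists_mem_ne_zero_of_ne_bot
    (LinearMap.ker_ne_bot_of_finrank_lt (f := f.prod g) (by simpa using hV))
  exact ⟨d, hd0, by simpa [Prod.ext_iff] using hd⟩

namespace LinearMap.BilinForm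

variable {F V : Type*} [Field F] [AddCommGroup V] [Module F V]

def gramMatrix {ι : Type*} (B : LinearMap.BilinForm F V) (v : ι → V) : Matrix ι ι F :=
  Matrix.of fun i j => B (v i) (v j)

variable {B : LinearMap.BilinForm F V}

section Gram

variable {ι : Type*} [Fintype ι] [DecidableEq ι] {v : ι → V}

theorem linearIndependent_of_det_gramMatrix_ne_zero (h : (B.gramMatrix v).det ≠ 0) :
    LinearIndependent F v := by
  rw [Fintype.linearIndependent_iff]
  intro g hg
  have hvecMul : g ᵥ* B.gramMatrix v = 0 := by
    ext j
    simpa [vecMul, dotProduct, gramMatrix, map_sum] using congrArg (B · (v j)) hg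
  exact congrFun (eq_zero_of_vecMul_eq_zero h hvecMul)

theorem nondegenerate_restrict_span_of_det_gramMatrix_ne_zero (h : (B.gramMatrix v).det ≠ 0) :
    (B.restrict (Submodule.span F (Set.range v))).Nondegenerate := by
  rw [nondegenerate_iff_det_ne_zero (Basis.span (linearIndependent_of_det_gramMatrix_ne_zero h))]
  convert h using 2
  ext i j
  simp [toMatrix_apply, Basis.span_apply, gramMatrix]

end Gram

@[simp]
theorem det_gramMatrix_single (a : V) : (B.gramMatrix ![a]).det = B a a := by
  simp [gramMatrix]

@[simp]
theorem det_gramMatrix_pair (a c : V) :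
    (B.gramMatrix ![a, c]).det = B a a * B c c - B a c * B c a := by
  simp [gramMatrix, det_fin_two]

theorem exists_self_ne_zero_of_nondegenerate [Nontrivial V] (h2 : (2 : F) ≠ 0)
    (hsymm : B.IsSymm) (hB : B.Nondegenerate) : ∃ x, B x x ≠ 0 := by
  have : Invertible (2 : F) := invertibleOfNonzero h2
  refine exists_bilinForm_self_ne_zero (fun h => ?_) (isSymm_iff.mp hsymm)
  obtain ⟨v, hv⟩ := exists_ne (0 : V)
  exact hv (hB.1 v (by simp [h]))

theorem exists_self_ne_zero_det_gramMatrix_pair_ne_zero (h2 : (2 : F) ≠ 0) (hF : 4 ≤ #F)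
    (hV : 2 < finrank F V) (hsymm : B.IsSymm) (hB : B.Nondegenerate) {a b : V}
    (ha : B a a ≠ 0) (hb : B b b ≠ 0) :
    ∃ c, B c c ≠ 0 ∧ (B.gramMatrix ![a, c]).det ≠ 0 ∧ (B.gramMatrix ![b, c]).det ≠ 0 := by
  have hgram (x c : V) : (B.gramMatrix ![x, c]).det = B x x * B c c - B x c * B x c := by
    rw [det_gramMatrix_pair, hsymm.eq c x]
  obtain ⟨d, hd0, had, hbd⟩ := exists_ne_zero_apply_eq_zero_of_two_lt_finrank hV (B a) (B b)
  by_cases hdd : B d d ≠ 0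
  · refine ⟨d, hdd, ?_, ?_⟩ <;> simpa [hgram, had, hbd] using ⟨‹_›, hdd⟩
  push Not at hdd
  obtain ⟨e, hde⟩ : ∃ e, B d e ≠ 0 := by
    by_contra! h
    exact hd0 (hB.1 d h)
  obtain ⟨s, hs⟩ := exists_forall_mul_add_ne_zero (n := 3) (lt_of_lt_of_le (by norm_num) hF)
    ![2 * B d e, 2 * B a a * B d e, 2 * B b b * B d e]
    ![B e e, B a a * B e e - B a e * B a e, B b b * B e e - B b e * B b e]
    (by simp [Fin.forall_fin_succ, h2, ha, hb, hde])
  have hself : B (s • d + e) (s • d + e) = 2 * B d e * s + B e e := by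
    simp only [map_add, map_smul, LinearMap.add_apply, LinearMap.smul_apply, smul_eq_mul, hdd,
      hsymm.eq e d]
    ring
  have hline (x : V) (hx : B x d = 0) : B x (s • d + e) = B x e := by simp [hx]
  refine ⟨s • d + e, ?_, ?_, ?_⟩
  · rw [hself]
    exact hs 0
  · rw [hgram, hself, hline a had]
    convert hs 1 using 1
    simp only [cons_val_one, cons_val_zero]
    ring
  · rw [hgram, hself, hline b hbd]
    convert hs 2 using 1
    simp only [cons_val]
    ring

end LinearMap.BilinForm

namespace collinearityGraph

open LinearMap.BilinForm

variable {F V : Type*} [Field F] [AddCommGroup V] [Module F V]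

def point (B : LinearMap.BilinForm F V) {a : V} (ha : B a a ≠ 0) :
    {P : Submodule F V // finrank F P = 1 ∧ (B.restrict P).Nondegenerate} :=
  ⟨Submodule.span F {a}, by
    have h : (B.gramMatrix ![a]).det ≠ 0 := by rwa [det_gramMatrix_single]
    have hrange : Set.range ![a] = {a} := range_cons_empty a _
    refine ⟨?_, hrange ▸ nondegenerate_restrict_span_of_det_gramMatrix_ne_zero h⟩
    have hrank := finrank_span_eq_card (linearIndependent_of_det_gramMatrix_ne_zero h)
    rw [hrange] at hrank
    simpa using hrank⟩

variable {B : LinearMap.BilinForm F V}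

theorem exists_eq_point
    (P : {P : Submodule F V // finrank F P = 1 ∧ (B.restrict P).Nondegenerate}) :
    ∃ (a : V) (ha : B a a ≠ 0), P = point B ha := by
  obtain ⟨P, hrank, hnd⟩ := P
  have : Module.Finite F P := Module.finite_of_finrank_pos (by omega)
  let b := Module.finBasisOfFinrankEq F P hrank
  have ha : B (b 0) (b 0) ≠ 0 := by
    simpa [toMatrix_apply] using (nondegenerate_iff_det_ne_zero b).mp hnd
  refine ⟨b 0, ha, Subtype.ext (Submodule.eq_of_le_of_finrank_eq ?_ ?_).symm⟩
  · exact (Submodule.span_singleton_le_iff_mem _ _).mpr (b 0).2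
  · rw [hrank]
    exact (point B ha).2.1

theorem point_adj_point {a c : V} (ha : B a a ≠ 0) (hc : B c c ≠ 0)
    (hac : (B.gramMatrix ![a, c]).det ≠ 0) :
    (collinearityGraph B).Adj (point B ha) (point B hc) := by
  have hspan : Submodule.span F {a} ⊔ Submodule.span F {c} =
      Submodule.span F (Set.range ![a, c]) := by
    rw [range_cons_cons_empty, Submodule.span_insert]
  have hrank : finrank F (Submodule.span F {a} ⊔ Submodule.span F {c} : Submodule F V) = 2 := by
    rw [hspan]
    simpa using finrank_span_eq_card (linearIndependent_of_det_gramMatrix_ne_zero hac)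
  refine ⟨fun h => ?_, hrank, hspan ▸ nondegenerate_restrict_span_of_det_gramMatrix_ne_zero hac⟩
  have hac_eq : Submodule.span F {a} = Submodule.span F {c} := congrArg Subtype.val h
  have hc1 : finrank F (Submodule.span F {c}) = 1 := (point B hc).2.1
  rw [hac_eq, sup_idem] at hrank
  omega

theorem edist_le_two (h2 : (2 : F) ≠ 0) (hF : 4 ≤ #F) (hV : 2 < finrank F V) (hsymm : B.IsSymm)
    (hB : B.Nondegenerate)
    (P Q : {P : Submodule F V // finrank F P = 1 ∧ (B.restrict P).Nondegenerate}) :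
    (collinearityGraph B).edist P Q ≤ 2 := by
  obtain ⟨a, ha, rfl⟩ := exists_eq_point P
  obtain ⟨b, hb, rfl⟩ := exists_eq_point Q
  obtain ⟨c, hc, hac, hbc⟩ :=
    exists_self_ne_zero_det_gramMatrix_pair_ne_zero h2 hF hV hsymm hB ha hb
  exact (SimpleGraph.Walk.cons (point_adj_point ha hc hac)
    (SimpleGraph.Walk.cons (point_adj_point hb hc hbc).symm .nil)).edist_le

end collinearityGraph

theorem orthogonal_collinearity_dim3_connected
    {F V : Type*} [Field F] [AddCommGroup V] [Module F V]
    (h2 : (2 : F) ≠ 0) (hF : 5 ≤ Cardinal.mk F) (hdim : finrank F V = 3)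
    (B : LinearMap.BilinForm F V) (hsymm : B.IsSymm) (hB : B.Nondegenerate) :
    (collinearityGraph B).Connected ∧ (collinearityGraph B).ediam ≤ 2 := by
  have : Nontrivial V := Module.nontrivial_of_finrank_pos (R := F) (by omega)
  obtain ⟨x, hx⟩ := LinearMap.BilinForm.exists_self_ne_zero_of_nondegenerate h2 hsymm hB
  have : Nonempty _ := ⟨collinearityGraph.point B hx⟩
  have hdiam : (collinearityGraph B).ediam ≤ 2 := SimpleGraph.ediam_le_of_edist_le
    (collinearityGraph.edist_le_two h2 ((by norm_num : (4 : Cardinal) ≤ 5).trans hF) (by omega)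
      hsymm hB)
  exact ⟨SimpleGraph.connected_of_ediam_ne_top (ne_top_of_le_ne_top (by decide) hdiam), hdiam⟩
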